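/- Under the change of variables t1 = t̂2, t2 = log t̂1 (for t̂1 > 0), the prepotentials F(t1,t2) = (1/2)(t1)^2 t2 + e^{t2} and F̂(t̂1,t̂2) = (1/2)(t̂2)^2 t̂1 + (1/2)(t̂1)^2(log t̂1 − 3/2) satisfy the Legendre transformation relations: t̂_α = ∂_{t^α}∂_{t^2}F (i.e., t̂2 = ∂_{t1}∂_{t2}F = t1 and t̂1 = ∂_{t2}∂_{t2}F = e^{t2}, where indices are lowered with η_{12}=η_{21}=1), and the second derivative matrices agree: ∂²F̂/∂t̂^α∂t̂^β = ∂²F/∂t^α∂t^β for all α,β. -/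

import Mathlib

noncomputable def pd (i : Fin 2) (f : ℝ → ℝ → ℝ) : ℝ → ℝ → ℝ :=
  fun x y => if i = 0 then deriv (fun s => f s y) x else deriv (fun s => f x s) y

noncomputable def F : ℝ → ℝ → ℝ := fun t1 t2 => (1/2) * t1^2 * t2 + Real.exp t2

noncomputable def Fhat : ℝ → ℝ → ℝ :=
  fun t1 t2 => (1/2) * t2^2 * t1 + (1/2) * t1^2 * (Real.log t1 - 3/2)

open Real Topology

section PartialDerivatives

variable {f g : ℝ → ℝ → ℝ} {x y : ℝ}

@[simp]
lemma pd_zero_apply : pd 0 f x y = deriv (fun s => f s y) x := rfl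

@[simp]
lemma pd_one_apply : pd 1 f x y = deriv (fun s => f x s) y := rfl

lemma pd_congr_of_isOpen {U : Set (ℝ × ℝ)} (hU : IsOpen U)
    (hfg : ∀ p ∈ U, f p.1 p.2 = g p.1 p.2) (hxy : (x, y) ∈ U) (i : Fin 2) :
    pd i f x y = pd i g x y := by
  fin_cases i
  · have hU' : ∀ᶠ s in 𝓝 x, (s, y) ∈ U :=
      (hU.preimage (continuous_id.prodMk continuous_const)).mem_nhds hxy
    exact Filter.EventuallyEq.deriv_eq (hU'.mono fun s hs => hfg _ hs)
  · have hU' : ∀ᶠ s in 𝓝 y, (x, s) ∈ U :=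
      (hU.preimage (continuous_const.prodMk continuous_id)).mem_nhds hxy
    exact Filter.EventuallyEq.deriv_eq (hU'.mono fun s hs => hfg _ hs)

end PartialDerivatives

lemma hessian_F (x y : ℝ) (α β : Fin 2) : pd α (pd β F) x y = !![y, x; x, exp y] α β := by
  fin_cases α <;> fin_cases β <;> simp (disch := fun_prop) [F, ← mul_assoc, div_eq_inv_mul]

lemma pd_one_Fhat : pd 1 Fhat = fun x y => x * y := by
  ext x y
  simp (disch := fun_prop) [Fhat]
  ring

lemma pd_zero_Fhat {x : ℝ} (y : ℝ) (hx : x ≠ 0) :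
    pd 0 Fhat x y = y ^ 2 / 2 + x * log x - x := by
  simp (disch := fun_prop (disch := assumption)) [Fhat]
  field_simp
  ring

/- `∂₁Fhat` has a closed form only off `x = 0` (`log` is not differentiable there); that set is
open, so the closed form also gives the second partials. -/
lemma hessian_Fhat {x : ℝ} (y : ℝ) (hx : x ≠ 0) (α β : Fin 2) :
    pd α (pd β Fhat) x y = !![log x, y; y, x] α β := by
  match β with
  | 0 =>
    have hU : IsOpen {p : ℝ × ℝ | p.1 ≠ 0} := isOpen_ne_fun continuous_fst continuous_const
    rw [pd_congr_of_isOpen (g := fun x y => y ^ 2 / 2 + x * log x - x) hU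
      (fun p hp => pd_zero_Fhat p.2 hp) hx α]
    fin_cases α <;> simp (disch := fun_prop (disch := assumption))
      [mul_inv_cancel₀ hx, mul_div_cancel_left₀ y two_ne_zero]
  | 1 =>
    rw [pd_one_Fhat]
    fin_cases α <;> simp

/-- The Legendre transformation `S₂` relating `F` and `F̂` under `t̂1 = e^{t2}`, `t̂2 = t1`:
`t̂₂ = ∂₁∂₂F = t1`, `t̂₁ = ∂₂∂₂F = e^{t2}` (indices lowered with the off-diagonal metric),
and the Hessians of `F` and `F̂` agree at corresponding points. -/
theorem stmt2 :
    ∀ t1 t2 : ℝ,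
      pd 0 (pd 1 F) t1 t2 = t1 ∧
      pd 1 (pd 1 F) t1 t2 = Real.exp t2 ∧
      ∀ α β : Fin 2, pd α (pd β Fhat) (Real.exp t2) t1 = pd α (pd β F) t1 t2 := by
  intro t1 t2
  refine ⟨by simpa using hessian_F t1 t2 0 1, by simpa using hessian_F t1 t2 1 1,
    fun α β => ?_⟩
  rw [hessian_Fhat t1 (exp_ne_zero t2), hessian_F, log_exp]
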